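/- arXiv:1602.08535 — 7 statements merged into one kernel-verified Lean document; each statement's English description precedes it below -/
import Mathlib

section
/- Let X be a rack satisfying a (τ,k,m) inner identity S: x·y_{τ(1)}·⋯·y_{τ(k)} = x. Let A be an abelian group and φ a rack 2-cocycle on X with values in A. Then the abelian extension E(X,A,φ) = X × A with operation (x,a)*(y,b) = (x*y, a+φ(x,y)) satisfies the identity S if and only if φ(L_S) = 0 for all x, y₁,…,y_m ∈ X, where φ(L_S) = φ(x, y_{τ(1)}) + Σ_{i=1}^{k−1} φ(x·y_{τ(1)}·⋯·y_{τ(i)}, y_{τ(i+1)}). -/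
lemma foldl_pair_aux {X A : Type*} [AddCommGroup A] (op : X → X → X) (φ : X → X → A) :
    ∀ (n : ℕ) (f : Fin n → X) (x : X) (a : A),
      (List.ofFn f).foldl (fun (u : X × A) (v : X) => (op u.1 v, u.2 + φ u.1 v)) (x, a)
        = ((List.ofFn f).foldl op x,
           a + ∑ i : Fin n, φ (((List.ofFn f).take i).foldl op x) (f i)) := by
  intro n
  induction n with
  | zero => intro f x a; simp
  | succ n ih =>
    intro f x a
    rw [List.ofFn_succ, List.foldl_cons, ih, List.foldl_cons]
    refine Prod.ext rfl ?_
    simp only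
    rw [Fin.sum_univ_succ]
    simp only [Fin.val_zero, List.take_zero, List.foldl_nil, Function.comp]
    rw [add_assoc]
    congr 1

/-- Let `X` be a rack satisfying a `(τ,k,m)` inner identity `S`, `A` an abelian
group and `φ` a rack 2-cocycle. The abelian extension `E(X,A,φ)` satisfies `S`
iff `φ(L_S) = 0` for all `x, y₁,…,y_m ∈ X`. -/
theorem extension_satisfies_identity_iff {X : Type*} {A : Type*} [AddCommGroup A]
    (op : X → X → X)
    (hbij : ∀ b : X, Function.Bijective fun a => op a b)
    (hdist : ∀ a b c : X, op (op a b) c = op (op a c) (op b c))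
    {k m : ℕ} (hk : 0 < k) (τ : Fin k → Fin m) (hτ : Function.Surjective τ)
    (hS : ∀ (x : X) (y : Fin m → X), (List.ofFn fun i => y (τ i)).foldl op x = x)
    (φ : X → X → A)
    (hcocycle : ∀ x y z : X,
      φ x y - φ x z + φ (op x y) z - φ (op x z) (op y z) = 0) :
    (∀ (p : X × A) (q : Fin m → X × A),
        (List.ofFn fun i => q (τ i)).foldl
          (fun u v : X × A => (op u.1 v.1, u.2 + φ u.1 v.1)) p = p)
    ↔ (∀ (x : X) (y : Fin m → X),
        ∑ i : Fin k,
          φ (((List.ofFn fun j => y (τ j)).take i).foldl op x) (y (τ i)) = 0) := by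
  have key : ∀ (p : X × A) (q : Fin m → X × A),
      (List.ofFn fun i => q (τ i)).foldl
          (fun u v : X × A => (op u.1 v.1, u.2 + φ u.1 v.1)) p
        = ((List.ofFn fun i => (q (τ i)).1).foldl op p.1,
           p.2 + ∑ i : Fin k,
             φ (((List.ofFn fun j => (q (τ j)).1).take i).foldl op p.1) ((q (τ i)).1)) := by
    intro p q
    have h0 : (List.ofFn fun i => q (τ i)).foldl
        (fun u v : X × A => (op u.1 v.1, u.2 + φ u.1 v.1)) p
        = ((List.ofFn fun i => q (τ i)).map Prod.fst).foldl
          (fun (u : X × A) (v : X) => (op u.1 v, u.2 + φ u.1 v)) p := by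
      rw [List.foldl_map]
    rw [h0, List.map_ofFn]
    exact foldl_pair_aux op φ k (fun i => (q (τ i)).1) p.1 p.2
  constructor
  · intro h x y
    have h1 := (key (x, 0) (fun j => (y j, 0))).symm.trans (h (x, 0) (fun j => (y j, 0)))
    have h2 := congrArg Prod.snd h1
    simpa using h2
  · intro h p q
    rw [key]
    have h1 := hS p.1 (fun j => (q j).1)
    have h2 := h p.1 (fun j => (q j).1)
    rw [h1, h2, add_zero]
end

section
/- Let X be a quandle of type n (i.e., x*^n y = x for all x,y, where x*^n y means x*y*⋯*y with y repeated n times, left-associated), A an abelian group, and φ a 2-cocycle with Σ_{i=0}^{n−1} φ(x*^i y, y) = 0 for all x,y ∈ X. Then the abelian extension E(X,A,φ) also satisfies (x,a)*^n (y,b) = (x,a) for all (x,a),(y,b) ∈ E(X,A,φ). -/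
/-- If `X` is a quandle of type `n` and `φ` is a 2-cocycle with
`Σ_{i=0}^{n−1} φ(x*^i y, y) = 0` for all `x,y`, then the abelian extension
`E(X,A,φ)` also satisfies `(x,a) *^n (y,b) = (x,a)`. -/
theorem extension_of_type_n {X : Type*} {A : Type*} [AddCommGroup A]
    (op : X → X → X)
    (hbij : ∀ b : X, Function.Bijective fun a => op a b)
    (hdist : ∀ a b c : X, op (op a b) c = op (op a c) (op b c))
    (hidem : ∀ a : X, op a a = a)
    {n : ℕ} (hn : 0 < n)
    (htype : ∀ x y : X, (List.replicate n y).foldl op x = x)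
    (φ : X → X → A)
    (hcocycle : ∀ x y z : X,
      φ x y - φ x z + φ (op x y) z - φ (op x z) (op y z) = 0)
    (hdiag : ∀ x : X, φ x x = 0)
    (hL : ∀ x y : X, ∑ i ∈ Finset.range n, φ ((List.replicate i y).foldl op x) y = 0) :
    ∀ p q : X × A,
      (List.replicate n q).foldl
        (fun u v : X × A => (op u.1 v.1, u.2 + φ u.1 v.1)) p = p := by
  intro p q
  obtain ⟨x, a⟩ := p
  obtain ⟨y, b⟩ := q
  have key : ∀ k : ℕ,
      (List.replicate k (y, b)).foldl
        (fun u v : X × A => (op u.1 v.1, u.2 + φ u.1 v.1)) (x, a)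
      = ((List.replicate k y).foldl op x,
         a + ∑ i ∈ Finset.range k, φ ((List.replicate i y).foldl op x) y) := by
    intro k
    induction k with
    | zero => simp
    | succ k ih =>
        rw [List.replicate_succ', List.replicate_succ' (n := k),
          List.foldl_append, List.foldl_append, ih]
        simp [Finset.sum_range_succ, add_assoc]
  rw [key n, htype, hL]
  simp
end

section
/- Let X be a quandle satisfying an identity x·w = x for all values of the variables, where w is a word in variables y₁,…,y_m (left-associated product applied to x) in which some variable, say y₁, appears exactly once. Then X is a trivial quandle: a*b = a for all a,b ∈ X. -/
private lemma foldl_const_aux {X : Type*} (op : X → X → X) (a : X) :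
    ∀ (l : List X), (∀ c ∈ l, c = a) → ∀ z : X,
      List.foldl op z l = (fun z => op z a)^[l.length] z := by
  intro l
  induction l with
  | nil => intro _ z; simp
  | cons c t ih =>
    intro h z
    have hc : c = a := h c (by simp)
    simp only [List.foldl_cons, List.length_cons, Function.iterate_succ, Function.comp_apply, hc]
    exact ih (fun d hd => h d (by simp [hd])) (op z a)

/-- If a quandle satisfies `x·w = x` for a word `w` in variables `y₁,…,y_m`
(a list of indices) in which some variable appears exactly once, then the
quandle is trivial: `a*b = a` for all `a,b`. -/
theorem identity_with_single_letter_trivial {X : Type*} (op : X → X → X)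
    (hbij : ∀ b : X, Function.Bijective fun a => op a b)
    (hdist : ∀ a b c : X, op (op a b) c = op (op a c) (op b c))
    (hidem : ∀ a : X, op a a = a)
    {m : ℕ} (w : List (Fin m)) (j₀ : Fin m) (hone : w.count j₀ = 1)
    (hS : ∀ (x : X) (y : Fin m → X), (w.map y).foldl op x = x) :
    ∀ a b : X, op a b = a := by
  intro a b
  set y : Fin m → X := fun i => if i = j₀ then b else a with hy
  have hmem : j₀ ∈ w := by
    by_contra h
    simp [List.count_eq_zero_of_not_mem h] at hone
  obtain ⟨u, v, rfl⟩ := List.append_of_mem hmem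
  have hcu : u.count j₀ = 0 ∧ v.count j₀ = 0 := by
    simp [List.count_append, List.count_cons] at hone
    omega
  have hu : ∀ c ∈ u.map y, c = a := by
    intro c hc
    obtain ⟨i, hi, rfl⟩ := List.mem_map.mp hc
    have hne : i ≠ j₀ := by
      intro h; subst h
      exact (List.count_eq_zero.mp hcu.1) hi
    simp [hy, hne]
  have hv : ∀ c ∈ v.map y, c = a := by
    intro c hc
    obtain ⟨i, hi, rfl⟩ := List.mem_map.mp hc
    have hne : i ≠ j₀ := by
      intro h; subst h
      exact (List.count_eq_zero.mp hcu.2) hi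
    simp [hy, hne]
  have key := hS a y
  rw [List.map_append, List.foldl_append] at key
  have hfix : ∀ n : ℕ, (fun z => op z a)^[n] a = a :=
    fun n => Function.iterate_fixed (f := fun z => op z a) (hidem a) n
  have h1 : List.foldl op a (u.map y) = a := by
    rw [foldl_const_aux op a _ hu a, hfix]
  rw [h1] at key
  have hyj : y j₀ = b := by simp [hy]
  simp only [List.map_cons, List.foldl_cons, hyj] at key
  rw [foldl_const_aux op a _ hv (op a b)] at key
  have hinj : Function.Injective ((fun z => op z a)^[(v.map y).length]) :=
    Function.Injective.iterate (hbij a).1 _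
  exact hinj (key.trans (hfix (v.map y).length).symm)
end

section
/- Let X be a quandle satisfying the identity x·a^h·b^k·a^{|w|−h−k} = x for all x,a,b ∈ X (where exponents denote repetition and products are left-associated), with k ≥ 1 and |w|−k ≥ 1. Then a*^k b = a and b*^{|w|−k} a = b for all a,b ∈ X; consequently the type of X divides gcd(k, |w|−k), so type(X) ≤ gcd(k, |w|−k). -/
private lemma foldl_replicate_iterate' {X : Type*} (op : X → X → X) (y : X) :
    ∀ (n : ℕ) (x : X), (List.replicate n y).foldl op x = (fun a => op a y)^[n] x := by
  intro n
  induction n with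
  | zero => intro x; rfl
  | succ n ih =>
    intro x
    rw [List.replicate_succ, List.foldl_cons, Function.iterate_succ_apply, ih]

private lemma iter_id_mul' {X : Type*} (f : X → X) (k : ℕ)
    (hk : ∀ x, f^[k] x = x) : ∀ (q : ℕ) (x : X), f^[k * q] x = x := by
  intro q
  induction q with
  | zero => simp
  | succ q ih =>
    intro x
    rw [Nat.mul_succ, Function.iterate_add_apply, hk, ih]

private lemma iter_id_gcd' {X : Type*} (f : X → X) :
    ∀ (k m : ℕ), (∀ x, f^[k] x = x) → (∀ x, f^[m] x = x) →
      ∀ x, f^[Nat.gcd k m] x = x := by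
  intro k
  induction k using Nat.strong_induction_on with
  | _ k ih =>
    intro m hk hm x
    rcases Nat.eq_zero_or_pos k with h0 | hpos
    · subst h0; simpa using hm x
    · rw [Nat.gcd_rec k m]
      refine ih (m % k) (Nat.mod_lt _ hpos) k ?_ hk x
      intro x
      have hx := hm x
      conv at hx => rw [← Nat.div_add_mod m k]
      rwa [Function.iterate_add_apply, iter_id_mul' f k hk] at hx

/-- If a quandle satisfies `x·a^h·b^k·a^r = x` for all `x,a,b` (with `k ≥ 1`
and `h + r = |w| − k ≥ 1`), then `a*^k b = a` and `b*^{h+r} a = b` for all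
`a,b`; consequently the type of `X` (the least positive `n` with
`x*^n y = x` for all `x,y`), if it exists, is at most `gcd(k, h+r)`. -/
theorem identity_two_blocks_type_bound {X : Type*} (op : X → X → X)
    (hbij : ∀ b : X, Function.Bijective fun a => op a b)
    (hdist : ∀ a b c : X, op (op a b) c = op (op a c) (op b c))
    (hidem : ∀ a : X, op a a = a)
    (h k r : ℕ) (hk : 1 ≤ k) (hr : 1 ≤ h + r)
    (hS : ∀ x a b : X,
      (List.replicate h a ++ List.replicate k b ++ List.replicate r a).foldl op x = x) :
    (∀ a b : X, (List.replicate k b).foldl op a = a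
        ∧ (List.replicate (h + r) a).foldl op b = b) ∧
    (∀ n : ℕ,
      IsLeast {n : ℕ | 0 < n ∧ ∀ x y : X, (List.replicate n y).foldl op x = x} n →
        n ≤ Nat.gcd k (h + r)) := by
  set g : X → X → X := fun a x => op x a with hg
  -- rewrite hS in terms of iterates
  have hS' : ∀ a b x : X, (g a)^[r] ((g b)^[k] ((g a)^[h] x)) = x := by
    intro a b x
    have := hS x a b
    rwa [List.foldl_append, List.foldl_append, foldl_replicate_iterate',
      foldl_replicate_iterate', foldl_replicate_iterate'] at this
  -- key: R_b^k = R_a^k pointwise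
  have hkey : ∀ a b z : X, (g b)^[k] z = (g a)^[k] z := by
    intro a b z
    obtain ⟨x, hx⟩ := ((hbij a).surjective.iterate h) z
    have h1 := hS' a b x
    have h2 := hS' a a x
    have hinj : Function.Injective ((g a)^[r]) := (hbij a).injective.iterate r
    have := hinj (h1.trans h2.symm)
    rw [hx] at this
    exact this
  -- R_a fixes a, hence all iterates do
  have hfix : ∀ (a : X) (n : ℕ), (g a)^[n] a = a := fun a n =>
    Function.iterate_fixed (show g a a = a from hidem a) n
  have hak : ∀ a b : X, (g b)^[k] a = a := by
    intro a b
    rw [hkey a b a, hfix]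
  have hahr : ∀ a b : X, (g a)^[h + r] b = b := by
    intro a b
    have h2 : ∀ x : X, (g a)^[r + k + h] x = x := by
      intro x
      have := hS' a a x
      rwa [← Function.iterate_add_apply, ← Function.iterate_add_apply] at this
    have hb : (g a)^[k] b = b := by rw [hkey b a b, hfix]
    calc (g a)^[h + r] b = (g a)^[h + r] ((g a)^[k] b) := by rw [hb]
      _ = (g a)^[(h + r) + k] b := (Function.iterate_add_apply _ (h + r) k b).symm
      _ = (g a)^[r + k + h] b := by rw [show (h + r) + k = r + k + h from by omega]
      _ = b := h2 b
  constructor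
  · intro a b
    constructor
    · rw [foldl_replicate_iterate']
      exact hak a b
    · rw [foldl_replicate_iterate']
      exact hahr a b
  · intro n hn
    apply hn.2
    refine ⟨Nat.gcd_pos_of_pos_left _ hk, ?_⟩
    intro x y
    rw [foldl_replicate_iterate']
    exact iter_id_gcd' (g y) k (h + r) (fun x => hak x y) (fun x => hahr y x) x
end

section
/- A quandle X satisfies x*a*b*b*a = x for all x,a,b ∈ X if and only if X is a kei. -/
/-- A quandle satisfies `x*a*b*b*a = x` for all `x,a,b` iff it is a kei. -/
theorem identity_abba_iff_kei {X : Type*} (op : X → X → X)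
    (hbij : ∀ b : X, Function.Bijective fun a => op a b)
    (hdist : ∀ a b c : X, op (op a b) c = op (op a c) (op b c))
    (hidem : ∀ a : X, op a a = a) :
    (∀ x a b : X, op (op (op (op x a) b) b) a = x)
      ↔ (∀ x a : X, op (op x a) a = x) := by
  constructor
  · intro h x a
    have h1 := h x x a
    rw [hidem x] at h1
    exact (hbij x).1 (h1.trans (hidem x).symm)
  · intro h x a b
    rw [h (op x a) b, h x a]
end

section
/- Let X be a medial quandle, A an abelian group, and φ a quandle 2-cocycle such that φ(x,y) + φ(x*y, u*v) − φ(x,u) − φ(x*u, y*v) = 0 for all x,y,u,v ∈ X. Then the abelian extension E(X,A,φ) is medial. -/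
/-- If `X` is a medial quandle and `φ` is a quandle 2-cocycle with
`φ(x,y) + φ(x*y,u*v) − φ(x,u) − φ(x*u,y*v) = 0` for all `x,y,u,v`, then the
abelian extension `E(X,A,φ)` is medial. -/
theorem extension_medial {X : Type*} {A : Type*} [AddCommGroup A]
    (op : X → X → X)
    (hbij : ∀ b : X, Function.Bijective fun a => op a b)
    (hdist : ∀ a b c : X, op (op a b) c = op (op a c) (op b c))
    (hidem : ∀ a : X, op a a = a)
    (hmedial : ∀ x y u v : X, op (op x y) (op u v) = op (op x u) (op y v))
    (φ : X → X → A)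
    (hcocycle : ∀ x y z : X,
      φ x y - φ x z + φ (op x y) z - φ (op x z) (op y z) = 0)
    (hdiag : ∀ x : X, φ x x = 0)
    (hL : ∀ x y u v : X,
      φ x y + φ (op x y) (op u v) - φ x u - φ (op x u) (op y v) = 0) :
    ∀ p q r s : X × A,
      (fun a b : X × A => (op a.1 b.1, a.2 + φ a.1 b.1))
          ((fun a b : X × A => (op a.1 b.1, a.2 + φ a.1 b.1)) p q)
          ((fun a b : X × A => (op a.1 b.1, a.2 + φ a.1 b.1)) r s)
        = (fun a b : X × A => (op a.1 b.1, a.2 + φ a.1 b.1))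
            ((fun a b : X × A => (op a.1 b.1, a.2 + φ a.1 b.1)) p r)
            ((fun a b : X × A => (op a.1 b.1, a.2 + φ a.1 b.1)) q s) := by
  intro p q r s
  simp only [Prod.ext_iff]
  refine ⟨hmedial _ _ _ _, ?_⟩
  have h := hL p.1 q.1 r.1 s.1

  rw [eq_comm, ← sub_eq_zero] at h ⊢
  rw [← h]; abel
end

section
/- For integers m ≥ 1 and n > 1, and any prime p > n, let g(t) = 1 + t^m + t^{2m} + ⋯ + t^{(n−1)m} and X = 𝔽_p[t]/(g(t)) with Alexander quandle operation x*y = t·x + (1−t)·y. Then 1−t is invertible in the ring X (since g(1) = n ≢ 0 mod p), and X satisfies the identity x*(y₁*⋯*y_m repeated n times) = x for all x, y₁,…,y_m ∈ X. -/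
open Polynomial

/-- The polynomial `g(t) = 1 + t^m + ⋯ + t^{(n−1)m}` over `𝔽_p`. -/
noncomputable def burnsidePoly (p m n : ℕ) : Polynomial (ZMod p) :=
  ∑ h ∈ Finset.range n, Polynomial.X ^ (h * m)

/-- The quotient ring `X = 𝔽_p[t]/(g(t))`. -/
abbrev burnsideRing (p m n : ℕ) :=
  Polynomial (ZMod p) ⧸ Ideal.span {burnsidePoly p m n}

/-- The image of `t` in `X`. -/
noncomputable def burnsideT (p m n : ℕ) : burnsideRing p m n :=
  Ideal.Quotient.mk _ Polynomial.X

/-- The Alexander quandle operation `x*y = t·x + (1−t)·y` on `X`. -/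
noncomputable def burnsideOp (p m n : ℕ) (x y : burnsideRing p m n) :
    burnsideRing p m n :=
  burnsideT p m n * x + (1 - burnsideT p m n) * y

/-!
Folding the Alexander operation `x * y = t x + (1 - t) y` over a word `B` of length `k` is the
affine map `x ↦ tᵏ x + c_B`. Hence the word `Bⁿ` acts by
`x ↦ t^{nk} x + (∑_{h<n} t^{hk}) c_B`, and both coefficients are trivial as soon as
`∑_{h<n} t^{hk} = 0`, because `(t^k - 1) ∑_{h<n} t^{hk} = t^{nk} - 1`. In `X` with `k = m` that sum
is the image of `g`. Invertibility of `1 - t` comes from `g(t) - g(1) ∈ (t - 1)`, with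
`g(1) = n` a unit of `𝔽_p` when `0 < n < p`.
-/

section AlexanderQuandle

variable {R : Type*} [CommRing R]

def alexanderOp (t x y : R) : R := t * x + (1 - t) * y

lemma foldl_alexanderOp (t : R) (B : List R) (x : R) :
    B.foldl (alexanderOp t) x = t ^ B.length * x + B.foldl (alexanderOp t) 0 := by
  induction B generalizing x with
  | nil => simp
  | cons y B ih =>
    rw [List.foldl_cons, List.foldl_cons, ih, ih (alexanderOp t 0 y), List.length_cons]
    simp only [alexanderOp]
    ring

lemma foldl_alexanderOp_flatten_replicate (t : R) (B : List R) (n : ℕ) (x : R) :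
    (List.flatten (List.replicate n B)).foldl (alexanderOp t) x =
      t ^ (n * B.length) * x +
        (∑ h ∈ Finset.range n, t ^ (h * B.length)) * B.foldl (alexanderOp t) 0 := by
  induction n generalizing x with
  | zero => simp
  | succ n ih =>
    rw [List.replicate_succ, List.flatten_cons, List.foldl_append, ih, foldl_alexanderOp,
      Finset.sum_range_succ, Nat.succ_mul, pow_add]
    ring

lemma pow_mul_eq_one_of_sum_pow_mul_eq_zero {t : R} {k n : ℕ}
    (h : ∑ i ∈ Finset.range n, t ^ (i * k) = 0) : t ^ (n * k) = 1 := by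
  have hgeom := geom_sum_mul (t ^ k) n
  simp only [← pow_mul', h, zero_mul] at hgeom
  exact (sub_eq_zero.mp hgeom.symm)

theorem foldl_alexanderOp_flatten_replicate_eq_self {t : R} {B : List R} {n : ℕ}
    (h : ∑ i ∈ Finset.range n, t ^ (i * B.length) = 0) (x : R) :
    (List.flatten (List.replicate n B)).foldl (alexanderOp t) x = x := by
  rw [foldl_alexanderOp_flatten_replicate, pow_mul_eq_one_of_sum_pow_mul_eq_zero h, h]
  ring

end AlexanderQuandle

theorem isUnit_mk_X_sub_C_of_isUnit_eval {R : Type*} [CommRing R] {f : R[X]} {a : R}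
    (h : IsUnit (f.eval a)) : IsUnit (Ideal.Quotient.mk (Ideal.span {f}) (X - C a)) := by
  obtain ⟨q, hq⟩ := X_sub_C_dvd_sub_C_eval (p := f) (a := a)
  have hmk : Ideal.Quotient.mk (Ideal.span {f}) (X - C a) * Ideal.Quotient.mk _ q =
      -algebraMap R _ (f.eval a) := by
    rw [← map_mul, ← hq, map_sub, Ideal.Quotient.mk_singleton_self, zero_sub]
    rfl
  refine isUnit_of_mul_isUnit_left (y := Ideal.Quotient.mk _ q) ?_
  rw [hmk]
  exact (h.map (algebraMap R (R[X] ⧸ Ideal.span {f}))).neg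

lemma burnsidePoly_eval_one (p m n : ℕ) : (burnsidePoly p m n).eval 1 = n := by
  simp [burnsidePoly, eval_finsetSum]

lemma sum_pow_burnsideT (p m n : ℕ) :
    ∑ h ∈ Finset.range n, burnsideT p m n ^ (h * m) = 0 := by
  simp only [burnsideT, ← map_pow, ← map_sum]
  exact Ideal.Quotient.mk_singleton_self _

theorem burnside_identity_family_general (m n p : ℕ) (hn : 1 < n)
    (hp : p.Prime) (hpn : n < p) :
    IsUnit (1 - burnsideT p m n) ∧
    ∀ (x : burnsideRing p m n) (y : Fin m → burnsideRing p m n),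
      (List.flatten (List.replicate n (List.ofFn y))).foldl
        (burnsideOp p m n) x = x := by
  constructor
  · have hn_unit : IsUnit ((burnsidePoly p m n).eval 1) := by
      rw [burnsidePoly_eval_one, ZMod.isUnit_iff_coprime]
      exact (Nat.coprime_of_lt_prime (by omega) hpn hp).symm
    have ht := (isUnit_mk_X_sub_C_of_isUnit_eval hn_unit).neg
    rwa [← map_neg, neg_sub, C_1, map_sub, map_one] at ht
  · intro x y
    refine foldl_alexanderOp_flatten_replicate_eq_self ?_ x
    rw [List.length_ofFn]
    exact sum_pow_burnsideT p m n

/-- For `m ≥ 1`, `n > 1` and a prime `p > n`, in `X = 𝔽_p[t]/(g(t))` with the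
Alexander quandle operation, `1−t` is invertible and `X` satisfies the identity
`x·(y₁⋯y_m)ⁿ = x` for all `x, y₁,…,y_m ∈ X`. -/
theorem burnside_identity_family (m n p : ℕ) (hm : 1 ≤ m) (hn : 1 < n)
    (hp : p.Prime) (hpn : n < p) :
    IsUnit (1 - burnsideT p m n) ∧
    ∀ (x : burnsideRing p m n) (y : Fin m → burnsideRing p m n),
      (List.flatten (List.replicate n (List.ofFn y))).foldl
        (burnsideOp p m n) x = x :=
  burnside_identity_family_general m n p hn hp hpn
end
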